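/- Let n ≥ 1 and let R be a nonzero real number. Regard A = Mₙ(ℂ) as an algebra over ℝ with Frobenius form ε(a) = 2Rn·Re(Tr(a)), and define z = (2Rn)⁻² · Σ_{w,t ∈ {1,i}} Σ_{l,m,r,s=1}^{n} (w·e_{lm})·(t·e_{rs})·(w̄·e_{ml})·(t̄·e_{sr}), where i is the imaginary unit and w̄ denotes complex conjugation of the scalar w. Then z = (Rn)⁻²·1, and for every natural number g, R·ε(z^g) = 2·R^{2−2g}·n^{2−2g}. -/

import Mathlib

open Matrix ComplexConjugate

/-!
The product `e_{lm} e_{rs} e_{ml} e_{sr}` of matrix units vanishes unless `l = m = r = s`, so the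
sum over indices collapses to `∑ e_{ll} = 1`, weighted by `(∑_w |w|²)² = 4`. Hence `z` is the
scalar `(Rn)⁻²`, and `R ε(z^g)` reduces to the real identity
`R · 2Rn · (Rn)^{-2g} · n = 2 (Rn)^{2-2g}`.
-/

namespace Matrix

variable {ι : Type*} [Fintype ι] [DecidableEq ι]

theorem sum_single_mul_single_mul_single_mul_single {α : Type*} [Semiring α] :
    ∑ l : ι, ∑ m : ι, ∑ r : ι, ∑ s : ι,
      single l m (1 : α) * single r s 1 * single m l 1 * single s r 1 = 1 := by
  ext i j
  simp [sum_apply, mul_apply, single, ite_and, one_apply]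

theorem sum_smul_single_handle_eq {κ : Type*} [Fintype κ] (u : κ → ℂ) :
    ∑ w, ∑ t, ∑ l : ι, ∑ m : ι, ∑ r : ι, ∑ s : ι,
      (u w • single l m (1 : ℂ)) * (u t • single r s 1) *
        (conj (u w) • single m l 1) * (conj (u t) • single s r 1) =
      (((∑ w, Complex.normSq (u w)) ^ 2 : ℝ) : ℂ) • (1 : Matrix ι ι ℂ) := by
  simp only [smul_mul_assoc, mul_smul_comm, smul_smul, ← Finset.smul_sum,
    sum_single_mul_single_mul_single_mul_single, ← Finset.sum_smul]
  congr 1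
  rw [sq, Finset.sum_mul_sum]
  push_cast
  refine Finset.sum_congr rfl fun w _ => Finset.sum_congr rfl fun t _ => ?_
  rw [← Complex.mul_conj, ← Complex.mul_conj]
  ring

theorem re_trace_pow_ofReal_smul_one (c : ℝ) (g : ℕ) :
    (((c : ℂ) • (1 : Matrix ι ι ℂ)) ^ g).trace.re = c ^ g * Fintype.card ι := by
  rw [smul_pow, one_pow, trace_smul, trace_one, smul_eq_mul, ← Complex.ofReal_pow,
    ← Complex.ofReal_natCast, ← Complex.ofReal_mul, Complex.ofReal_re]

end Matrix

theorem sum_normSq_one_I : ∑ w, Complex.normSq (![1, Complex.I] w) = 2 := by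
  rw [Fin.sum_univ_two]; norm_num

theorem sq_mul_zpow_neg_two_pow {x : ℝ} (hx : x ≠ 0) (g : ℕ) :
    x ^ 2 * (x ^ (-2 : ℤ)) ^ g = x ^ ((2 : ℤ) - 2 * g) := by
  rw [← zpow_natCast (x ^ (-2 : ℤ)), ← _root_.zpow_mul, ← zpow_natCast x 2, ← zpow_add₀ hx]
  ring_nf

/-- For the FHK state sum model on `Mₙ(ℂ)` regarded as a real algebra, with Frobenius form
`ε(a) = 2Rn·Re(Tr a)` and handle element
`z = (2Rn)⁻² ∑_{w,t ∈ {1,i}} ∑_{l,m,r,s} (w e_{lm})(t e_{rs})(w̄ e_{ml})(t̄ e_{sr})`,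
one has `z = (Rn)⁻² • 1` and `R ε(z^g) = 2·R^{2−2g}·n^{2−2g}`. -/
theorem fhk_partition_function_complex_as_real_algebra
    (n : ℕ) (hn : 1 ≤ n) (R : ℝ) (hR : R ≠ 0)
    (u : Fin 2 → ℂ) (hu : u = ![1, Complex.I])
    (z : Matrix (Fin n) (Fin n) ℂ)
    (hz : z = (((2 * R * (n : ℝ) : ℝ) : ℂ) ^ (-2 : ℤ)) •
        ∑ w : Fin 2, ∑ t : Fin 2, ∑ l : Fin n, ∑ m : Fin n, ∑ r : Fin n, ∑ s : Fin n,
          (u w • single l m (1 : ℂ)) * (u t • single r s 1) *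
            ((starRingEnd ℂ) (u w) • single m l 1) *
            ((starRingEnd ℂ) (u t) • single s r 1)) :
    z = (((R * (n : ℝ) : ℝ) : ℂ) ^ (-2 : ℤ)) • (1 : Matrix (Fin n) (Fin n) ℂ) ∧
      ∀ g : ℕ, R * (2 * R * (n : ℝ) * ((z ^ g).trace).re)
        = 2 * R ^ ((2 : ℤ) - 2 * (g : ℤ)) * (n : ℝ) ^ ((2 : ℤ) - 2 * (g : ℤ)) := by
  have hRn : R * n ≠ 0 := mul_ne_zero hR (by positivity)
  have hz' : z = (((R * (n : ℝ) : ℝ) : ℂ) ^ (-2 : ℤ)) • (1 : Matrix (Fin n) (Fin n) ℂ) := by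
    rw [hz, sum_smul_single_handle_eq, hu, sum_normSq_one_I, smul_smul, ← Complex.ofReal_zpow,
      ← Complex.ofReal_mul, ← Complex.ofReal_zpow]
    congr 2
    rw [mul_assoc, mul_zpow]
    field_simp
  refine ⟨hz', fun g => ?_⟩
  rw [hz', ← Complex.ofReal_zpow, re_trace_pow_ofReal_smul_one, Fintype.card_fin]
  calc R * (2 * R * n * (((R * n) ^ (-2 : ℤ)) ^ g * n))
      = 2 * ((R * n) ^ 2 * ((R * n) ^ (-2 : ℤ)) ^ g) := by ring
    _ = 2 * (R * n) ^ ((2 : ℤ) - 2 * g) := by rw [sq_mul_zpow_neg_two_pow hRn]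
    _ = _ := by rw [mul_zpow, mul_assoc]
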